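/- Let n ≥ 1, let ε ∈ (0, 1), and set R = (1+ε)/(1−ε). Let C ⊆ ℝⁿ (Euclidean space) be a compact convex set with nonempty interior such that dist(x, ∂C) < R for all x ∈ C, where ∂C is the topological boundary of C. Assume that for each b ∈ ∂C there exist r > 0 and a function F_b : B_r(b) ∩ C → ℝ which is (1+ε)-Lipschitz and (−1+ε)-concave on B_r(b) ∩ C, with F_b(q) = −1/2 for every q ∈ B_r(b) ∩ ∂C and F_b(q) > −1/2 for every q ∈ B_r(b) ∩ int(C). Let u ∈ ℝⁿ be a unit vector, let γ(t) = γ(0) + t·u be a unit-speed segment with γ(0) ∈ int(C), let p ∈ ∂C be a point of ∂C nearest to γ(0), set d₀ = dist(γ(0), ∂C), and let α be the angle between u and p − γ(0). Then, as t → 0⁺, dist(γ(t), ∂C) ≤ R − √( (R − d₀)² + t² + 2·(R − d₀)·t·cos α ) + o(t²); that is, limsup_{t → 0⁺} [ dist(γ(t), ∂C) − ( R − √( (R − d₀)² + t² + 2(R − d₀)·t·cos α ) ) ] / t² ≤ 0. -/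

import Mathlib

/-- A unit-speed geodesic (on `[a,b]`) in a metric space. -/
def IsUnitSpeedGeodesic {X : Type*} [MetricSpace X] (γ : ℝ → X) (a b : ℝ) : Prop :=
  ∀ s ∈ Set.Icc a b, ∀ t ∈ Set.Icc a b, dist (γ s) (γ t) = |s - t|

/-- `f` is `λ`-concave on `Ω`: along every unit-speed geodesic with image in `Ω`,
`t ↦ f (γ t) - (λ/2) t²` is concave. In Euclidean space unit-speed geodesics are
exactly unit-speed parametrized line segments. -/
def LambdaConcaveOn {X : Type*} [MetricSpace X] (lam : ℝ) (f : X → ℝ) (Ω : Set X) : Prop :=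
  ∀ (γ : ℝ → X) (a b : ℝ), a ≤ b → IsUnitSpeedGeodesic γ a b →
    (∀ t ∈ Set.Icc a b, γ t ∈ Ω) →
    ConcaveOn ℝ (Set.Icc a b) (fun t => f (γ t) - lam / 2 * t ^ 2)

/-!
Let `ν = (p - γ₀) / d₀` and `M = p - R • ν`. The ball `B(γ₀, d₀)` lies in `C`, so convexity
puts `C` in the half-space `⟪x - p, ν⟫ ≤ 0`. For a boundary point `q` near `p`, restrict `F_p`
to the chord `[p, q]` of length `L`: `(-1+ε)`-concavity with the value `-1/2` at both ends
gives `F ≥ -1/2 + (1-ε) s (L-s) / 2` at arclength `s`, while the Lipschitz bound towards the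
boundary point reached by moving along `ν` gives `F ≤ -1/2 + (1+ε) (s/L) ⟪p - q, ν⟫`.
Letting `s → 0` yields `L² ≤ 2R ⟪p - q, ν⟫`, i.e. `q ∈ closedBall M R`; pushing points of `C`
along `ν` to `∂C` extends this to all of `C` near `p`. Hence the point where the ray from `M`
through `γ(t)` meets `sphere M R` is not interior to `C`, and for small `t`
`dist(γ(t), ∂C) ≤ R - ‖γ(t) - M‖`, which is the comparison quantity.
-/

open Metric Set Filter Topology
open scoped RealInnerProductSpace

/- Only the bound `0` works in general: `limsup` is junk `0` when `f` is not frequently bounded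
below. -/
theorem limsup_nonpos_of_eventually_nonpos {α : Type*} {l : Filter α} {f : α → ℝ}
    (h : ∀ᶠ x in l, f x ≤ 0) : limsup f l ≤ 0 := by
  rw [limsup_eq]
  exact Real.sInf_nonpos' ⟨0, h, le_rfl⟩

theorem le_of_forall_le_add_mul {a b c : ℝ} (h : ∀ θ ∈ Ioo (0 : ℝ) 1, a ≤ b + θ * c) :
    a ≤ b := by
  have hlim : Tendsto (fun θ : ℝ => b + θ * c) (𝓝[>] 0) (𝓝 b) := by
    have : Continuous fun θ : ℝ => b + θ * c := by fun_prop
    simpa using (this.tendsto 0).mono_left nhdsWithin_le_nhds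
  exact ge_of_tendsto hlim (eventually_of_mem (Ioo_mem_nhdsGT zero_lt_one) h)

section Normed

variable {E : Type*} [NormedAddCommGroup E] [NormedSpace ℝ E] {C : Set E}

theorem exists_mem_segment_mem_frontier {x y : E} (hx : x ∈ C) (hy : y ∉ interior C) :
    ∃ z ∈ segment ℝ x y, z ∈ frontier C := by
  by_cases hxi : x ∈ interior C
  swap
  · exact ⟨x, left_mem_segment ℝ x y, subset_closure hx, hxi⟩
  by_contra! hdisj
  have hsub : segment ℝ x y ⊆ interior C ∪ (closure C)ᶜ := fun z hz => by
    by_cases hzc : z ∈ closure C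
    · exact Or.inl (not_not.1 fun hzi => hdisj z hz ⟨hzc, hzi⟩)
    · exact Or.inr hzc
  exact hy <| (convex_segment x y).isPreconnected.subset_left_of_subset_union isOpen_interior
    isClosed_closure.isOpen_compl (disjoint_compl_right.mono_left interior_subset_closure) hsub
    ⟨x, left_mem_segment ℝ x y, hxi⟩ (right_mem_segment ℝ x y)

theorem infDist_frontier_le_dist {x y : E} (hx : x ∈ C) (hy : y ∉ interior C) :
    infDist x (frontier C) ≤ dist x y := by
  obtain ⟨z, hz, hzC⟩ := exists_mem_segment_mem_frontier hx hy
  calc infDist x (frontier C) ≤ dist x z := infDist_le_dist_of_mem hzC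
    _ ≤ dist x y := by linarith [dist_add_dist_of_mem_segment hz, dist_nonneg (x := z) (y := y)]

theorem ball_infDist_frontier_subset_interior {x : E} (hx : x ∈ C) :
    ball x (infDist x (frontier C)) ⊆ interior C := fun _ hy =>
  not_not.1 fun hyC => (infDist_frontier_le_dist hx hyC).not_gt (mem_ball'.1 hy)

theorem infDist_frontier_le_dist_of_eventually_mem_closedBall {M w x : E} {R : ℝ} (hR : R ≠ 0)
    (hw : dist w M = R) (hloc : ∀ᶠ y in 𝓝 w, y ∈ C → dist y M ≤ R) (hx : x ∈ C) :
    infDist x (frontier C) ≤ dist x w := by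
  refine infDist_frontier_le_dist hx fun hwC => ?_
  have hnhds : closedBall M R ∈ 𝓝 w := by
    filter_upwards [hloc, mem_interior_iff_mem_nhds.1 hwC] with y hy hyC using hy hyC
  have hw' := mem_interior_iff_mem_nhds.2 hnhds
  rw [interior_closedBall M hR, mem_ball] at hw'
  exact hw'.ne hw

theorem eventually_infDist_frontier_le {M x₀ : E} {R : ℝ} (hx₀ : x₀ ∈ interior C)
    (hM : 0 < dist x₀ M) (hR : dist x₀ M < R)
    (hloc : ∀ᶠ y in 𝓝 (M + (R / dist x₀ M) • (x₀ - M)), y ∈ C → dist y M ≤ R) :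
    ∀ᶠ x in 𝓝 x₀, infDist x (frontier C) ≤ R - dist x M := by
  set w : E → E := fun x => M + (R / dist x M) • (x - M)
  have hw : ContinuousAt w x₀ := by
    have : ContinuousAt (fun x => dist x M) x₀ := by fun_prop
    exact continuousAt_const.add ((continuousAt_const.div this hM.ne').smul
      (continuousAt_id.sub continuousAt_const))
  have hdist : ∀ᶠ x in 𝓝 x₀, dist x M ∈ Ioo 0 R :=
    (continuous_id.dist continuous_const).continuousAt.eventually
      (isOpen_Ioo.mem_nhds ⟨hM, hR⟩)
  filter_upwards [hw.eventually (eventually_eventually_nhds.2 hloc),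
    isOpen_interior.mem_nhds hx₀, hdist] with x hlocx hxC ⟨hx0, hxR⟩
  have hwM : dist (w x) M = R := by
    rw [dist_eq_norm, add_sub_cancel_left, norm_smul, ← dist_eq_norm,
      Real.norm_of_nonneg (div_nonneg (hx0.trans hxR).le hx0.le), div_mul_cancel₀ _ hx0.ne']
  have hxw : dist x (w x) = R - dist x M := by
    rw [dist_eq_norm, show x - w x = (1 - R / dist x M) • (x - M) by simp only [w]; module,
      norm_smul, Real.norm_eq_abs, ← dist_eq_norm, abs_of_nonpos, neg_sub, sub_mul,
      div_mul_cancel₀ _ hx0.ne', one_mul]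
    rw [sub_nonpos, one_le_div hx0]
    exact hxR.le
  exact hxw ▸ infDist_frontier_le_dist_of_eventually_mem_closedBall (hx0.trans hxR).ne' hwM
    hlocx (interior_subset hxC)

theorem isUnitSpeedGeodesic_lineMap {p q : E} (hpq : p ≠ q) (a b : ℝ) :
    IsUnitSpeedGeodesic (fun s => AffineMap.lineMap p q (s / dist p q)) a b := by
  intro s _ t _
  rw [dist_lineMap_lineMap, Real.dist_eq, ← sub_div, abs_div, abs_of_pos (dist_pos.2 hpq),
    div_mul_cancel₀ _ (dist_ne_zero.2 hpq)]

theorem LambdaConcaveOn.le_apply_lineMap {lam : ℝ} {f : E → ℝ} {Ω : Set E}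
    (hf : LambdaConcaveOn lam f Ω) {p q : E} (hΩ : segment ℝ p q ⊆ Ω) {θ : ℝ}
    (hθ : θ ∈ Icc (0 : ℝ) 1) :
    (1 - θ) * f p + θ * f q - lam / 2 * θ * (1 - θ) * dist p q ^ 2 ≤
      f (AffineMap.lineMap p q θ) := by
  rcases eq_or_ne p q with rfl | hpq
  · simp only [AffineMap.lineMap_same_apply, dist_self]
    linarith
  have hL : 0 < dist p q := dist_pos.2 hpq
  have hmem : ∀ s ∈ Icc 0 (dist p q), AffineMap.lineMap p q (s / dist p q) ∈ Ω := fun s hs =>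
    hΩ (lineMap_mem_segment ℝ p q ⟨div_nonneg hs.1 hL.le, (div_le_one hL).2 hs.2⟩)
  have hconc := (hf _ 0 _ hL.le (isUnitSpeedGeodesic_lineMap hpq 0 _) hmem).2
    (left_mem_Icc.2 hL.le) (right_mem_Icc.2 hL.le) (sub_nonneg.2 hθ.2) hθ.1 (by ring)
  simp only [smul_eq_mul, mul_zero, zero_add, zero_div, div_self hL.ne',
    mul_div_cancel_right₀ _ hL.ne', AffineMap.lineMap_apply_zero,
    AffineMap.lineMap_apply_one] at hconc
  nlinarith

end Normed

section InnerProduct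

variable {E : Type*} [NormedAddCommGroup E] [InnerProductSpace ℝ E] {C : Set E} {p ν : E}

theorem Convex.inner_sub_nonpos_of_ball_subset_interior (hC : Convex ℝ C) {c x : E} {r : ℝ}
    (hball : ball c r ⊆ interior C) (hp : p ∉ interior C) (hpc : dist p c = r) (hx : x ∈ C) :
    ⟪x - p, p - c⟫ ≤ 0 := by
  -- `ball ((1 - θ) • c + θ • x) ((1 - θ) * r)` lies in `interior C`, so it misses `p`.
  have hfar : ∀ θ ∈ Ioo (0 : ℝ) 1, (1 - θ) * r ≤ ‖(p - c) - θ • (x - c)‖ := by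
    intro θ hθ
    have h1θ : 0 < 1 - θ := sub_pos.2 hθ.2
    by_contra! hlt
    set m := c + (1 - θ)⁻¹ • ((p - c) - θ • (x - c))
    have hm : m ∈ ball c r := by
      rw [mem_ball, dist_eq_norm, add_sub_cancel_left, norm_smul, norm_inv,
        Real.norm_of_nonneg h1θ.le, inv_mul_lt_iff₀ h1θ]
      exact hlt
    have hpm : (1 - θ) • m + θ • x = p := by
      simp only [m, smul_add, smul_smul, mul_inv_cancel₀ h1θ.ne', one_smul]
      module
    exact hp (hpm ▸ hC.combo_interior_self_mem_interior (hball hm) hx h1θ hθ.1.le (by ring))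
  refine le_of_forall_le_add_mul (c := (‖x - c‖ ^ 2 - r ^ 2) / 2) fun θ hθ => ?_
  have hsq := pow_le_pow_left₀ (mul_nonneg (sub_pos.2 hθ.2).le (hpc ▸ dist_nonneg)) (hfar θ hθ) 2
  have hxc : x - c = (x - p) + (p - c) := by abel
  rw [norm_sub_sq_real, inner_smul_right, norm_smul, Real.norm_of_nonneg hθ.1.le, hxc,
    inner_add_right, real_inner_self_eq_norm_sq, ← dist_eq_norm, hpc, real_inner_comm,
    ← hxc] at hsq
  nlinarith [hθ.1]

theorem exists_add_smul_mem_frontier {x : E} (hν : ‖ν‖ = 1)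
    (hhalf : ∀ y ∈ C, ⟪y - p, ν⟫ ≤ 0) (hx : x ∈ C) :
    ∃ s, 0 ≤ s ∧ s ≤ ⟪p - x, ν⟫ ∧ x + s • ν ∈ frontier C := by
  set h := ⟪p - x, ν⟫
  have hinner : ∀ s : ℝ, ⟪x + s • ν - p, ν⟫ = s - h := fun s => by
    rw [show x + s • ν - p = s • ν - (p - x) by abel, inner_sub_left, real_inner_smul_left,
      real_inner_self_eq_norm_sq, hν]
    ring
  have hh : 0 ≤ h := by
    have := hhalf x hx
    rwa [← neg_sub, inner_neg_left, neg_nonpos] at this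
  have hy : x + h • ν ∉ interior C := fun hy => by
    obtain ⟨δ, hδ, hball⟩ := Metric.isOpen_iff.1 isOpen_interior _ hy
    have hmem : x + (h + δ / 2) • ν ∈ ball (x + h • ν) δ := by
      rw [mem_ball, dist_eq_norm, add_smul, ← add_assoc, add_sub_cancel_left, norm_smul, hν,
        mul_one, Real.norm_of_nonneg (by positivity)]
      linarith
    have := hinner (h + δ / 2) ▸ hhalf _ (interior_subset (hball hmem))
    linarith
  obtain ⟨z, hz, hzC⟩ := exists_mem_segment_mem_frontier hx hy
  rw [segment_eq_image'] at hz
  obtain ⟨θ, ⟨hθ0, hθ1⟩, rfl⟩ := hz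
  refine ⟨θ * h, by positivity, by nlinarith, ?_⟩
  simpa [smul_smul] using hzC

theorem norm_smul_add_smul_eq_sqrt {u : E} (hν : ‖ν‖ = 1) (hu : ‖u‖ = 1) (a t : ℝ) :
    ‖a • ν + t • u‖ = √(a ^ 2 + t ^ 2 + 2 * a * t * ⟪ν, u⟫) := by
  rw [← Real.sqrt_sq (norm_nonneg _), norm_add_sq_real, norm_smul, norm_smul, hν, hu,
    real_inner_smul_left, real_inner_smul_right, Real.norm_eq_abs, Real.norm_eq_abs, mul_one,
    mul_one, sq_abs, sq_abs]
  ring_nf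

theorem le_add_mul_inner_of_lipschitz (hν : ‖ν‖ = 1) (hhalf : ∀ y ∈ C, ⟪y - p, ν⟫ ≤ 0)
    (hCcl : IsClosed C) {K r c : ℝ} (hK : 0 ≤ K) {F : E → ℝ}
    (hFlip : ∀ x ∈ ball p r ∩ C, ∀ y ∈ ball p r ∩ C, |F x - F y| ≤ K * dist x y)
    (hFfr : ∀ q ∈ ball p r ∩ frontier C, F q = c)
    {x : E} (hx : x ∈ C) (hxr : dist x p + ⟪p - x, ν⟫ < r) :
    F x ≤ c + K * ⟪p - x, ν⟫ := by
  obtain ⟨s, hs0, hsx, hz⟩ := exists_add_smul_mem_frontier hν hhalf hx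
  have hxz : dist x (x + s • ν) = s := by
    rw [dist_eq_norm, sub_add_cancel_left, norm_neg, norm_smul, hν, mul_one,
      Real.norm_of_nonneg hs0]
  have hzp : x + s • ν ∈ ball p r := by
    rw [mem_ball]
    linarith [dist_triangle (x + s • ν) x p, dist_comm x (x + s • ν)]
  have hxp : x ∈ ball p r := mem_ball.2 (by linarith)
  have hup := le_of_abs_le (hFlip x ⟨hxp, hx⟩ _ ⟨hzp, hCcl.frontier_subset hz⟩)
  rw [hFfr _ ⟨hzp, hz⟩, hxz] at hup
  nlinarith

theorem dist_le_of_mem_frontier_of_lambdaConcaveOn (hν : ‖ν‖ = 1)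
    (hhalf : ∀ y ∈ C, ⟪y - p, ν⟫ ≤ 0) (hCconv : Convex ℝ C) (hCcl : IsClosed C)
    (hp : p ∈ frontier C) {K κ r c : ℝ} (hK : 0 ≤ K) (hκ : 0 < κ) {F : E → ℝ}
    (hFlip : ∀ x ∈ ball p r ∩ C, ∀ y ∈ ball p r ∩ C, |F x - F y| ≤ K * dist x y)
    (hFconc : LambdaConcaveOn (-κ) F (ball p r ∩ C))
    (hFfr : ∀ q ∈ ball p r ∩ frontier C, F q = c)
    {q : E} (hq : q ∈ frontier C) (hqp : dist q p < r / 2) :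
    dist q (p - (K / κ) • ν) ≤ K / κ := by
  have hR : 0 ≤ K / κ := div_nonneg hK hκ.le
  rcases eq_or_ne p q with rfl | hpq
  · rw [dist_eq_norm, sub_sub_cancel, norm_smul, hν, mul_one, Real.norm_of_nonneg hR]
  have hr : 0 < r := by linarith [dist_nonneg (x := q) (y := p)]
  have hpq' : dist p q < r / 2 := dist_comm p q ▸ hqp
  have hseg : segment ℝ p q ⊆ ball p r ∩ C :=
    ((convex_ball p r).inter hCconv).segment_subset
      ⟨mem_ball_self hr, hCcl.frontier_subset hp⟩
      ⟨mem_ball'.2 (by linarith), hCcl.frontier_subset hq⟩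
  set h := ⟪p - q, ν⟫
  have hhL : h ≤ dist p q := by
    simpa [hν, dist_eq_norm] using real_inner_le_norm (p - q) ν
  have hbound : ∀ θ ∈ Ioo (0 : ℝ) 1,
      κ / 2 * dist p q ^ 2 ≤ K * h + θ * (κ / 2 * dist p q ^ 2) := by
    intro θ hθ
    have hlow := hFconc.le_apply_lineMap hseg ⟨hθ.1.le, hθ.2.le⟩
    rw [hFfr p ⟨mem_ball_self hr, hp⟩, hFfr q ⟨mem_ball'.2 (by linarith), hq⟩] at hlow
    have hpx : ⟪p - AffineMap.lineMap p q θ, ν⟫ = θ * h := by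
      rw [AffineMap.lineMap_apply_module, show p - ((1 - θ) • p + θ • q) = θ • (p - q) by module,
        real_inner_smul_left]
    have hxp : dist (AffineMap.lineMap p q θ) p = θ * dist p q := by
      rw [dist_lineMap_left, Real.norm_of_nonneg hθ.1.le]
    have hup := le_add_mul_inner_of_lipschitz hν hhalf hCcl hK hFlip hFfr
      (hseg (lineMap_mem_segment ℝ p q ⟨hθ.1.le, hθ.2.le⟩)).2 (by
        rw [hxp, hpx]
        linarith [mul_le_mul_of_nonneg_left hhL hθ.1.le,
          mul_le_of_le_one_left (dist_nonneg (x := p) (y := q)) hθ.2.le])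
    rw [hpx] at hup
    have : θ * (κ / 2 * (1 - θ) * dist p q ^ 2) ≤ θ * (K * h) := by nlinarith
    nlinarith [le_of_mul_le_mul_left this hθ.1]
  have hLh : dist p q ^ 2 ≤ 2 * (K / κ) * h := by
    have := le_of_forall_le_add_mul hbound
    rw [mul_div_assoc', div_mul_eq_mul_div, le_div_iff₀ hκ]
    linarith
  have hsq : dist q (p - (K / κ) • ν) ^ 2 = dist p q ^ 2 - 2 * (K / κ) * h + (K / κ) ^ 2 := by
    rw [dist_eq_norm, show q - (p - (K / κ) • ν) = (K / κ) • ν - (p - q) by abel,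
      norm_sub_sq_real, norm_smul, real_inner_smul_left, real_inner_comm, hν,
      Real.norm_of_nonneg hR, ← dist_eq_norm]
    ring
  exact (pow_le_pow_iff_left₀ dist_nonneg hR two_ne_zero).1 (by linarith)

theorem dist_le_of_forall_mem_frontier_dist_le (hν : ‖ν‖ = 1)
    (hhalf : ∀ y ∈ C, ⟪y - p, ν⟫ ≤ 0) {R ρ : ℝ} (hρR : ρ ≤ R)
    (hfr : ∀ q ∈ frontier C, dist q p < ρ → dist q (p - R • ν) ≤ R)
    {x : E} (hx : x ∈ C) (hxp : dist x p < ρ / 4) : dist x (p - R • ν) ≤ R := by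
  obtain ⟨s, hs0, hsx, hz⟩ := exists_add_smul_mem_frontier hν hhalf hx
  set z := x + s • ν
  have hsρ : s < ρ / 4 := by
    have := real_inner_le_norm (p - x) ν
    rw [hν, mul_one, ← dist_eq_norm, dist_comm] at this
    linarith
  have hzx : dist z x = s := by
    rw [dist_eq_norm, add_sub_cancel_left, norm_smul, hν, mul_one, Real.norm_of_nonneg hs0]
  have hzp : dist z p < ρ / 2 := by linarith [dist_triangle z x p]
  have hinner : R - dist z p ≤ ⟪z - (p - R • ν), ν⟫ := by
    have := neg_le_of_abs_le (abs_real_inner_le_norm (z - p) ν)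
    rw [hν, mul_one, ← dist_eq_norm] at this
    rw [show z - (p - R • ν) = (z - p) + R • ν by abel, inner_add_left, real_inner_smul_left,
      real_inner_self_eq_norm_sq, hν]
    linarith
  have hsq : dist x (p - R • ν) ^ 2 =
      dist z (p - R • ν) ^ 2 - 2 * s * ⟪z - (p - R • ν), ν⟫ + s ^ 2 := by
    rw [dist_eq_norm, dist_eq_norm, show x - (p - R • ν) = (z - (p - R • ν)) - s • ν by
      simp only [z]; abel, norm_sub_sq_real, real_inner_smul_right, norm_smul, hν,
      Real.norm_of_nonneg hs0]
    ring
  have hzM := hfr z hz (by linarith)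
  have hR : 0 ≤ R := by linarith
  refine (pow_le_pow_iff_left₀ dist_nonneg hR two_ne_zero).1 ?_
  nlinarith [pow_le_pow_left₀ dist_nonneg hzM 2, mul_le_mul_of_nonneg_left hinner hs0]

theorem eventually_dist_le_of_lambdaConcaveOn (hν : ‖ν‖ = 1)
    (hhalf : ∀ y ∈ C, ⟪y - p, ν⟫ ≤ 0) (hCconv : Convex ℝ C) (hCcl : IsClosed C)
    (hp : p ∈ frontier C) {K κ r c : ℝ} (hK : 0 < K) (hκ : 0 < κ) (hr : 0 < r) {F : E → ℝ}
    (hFlip : ∀ x ∈ ball p r ∩ C, ∀ y ∈ ball p r ∩ C, |F x - F y| ≤ K * dist x y)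
    (hFconc : LambdaConcaveOn (-κ) F (ball p r ∩ C))
    (hFfr : ∀ q ∈ ball p r ∩ frontier C, F q = c) :
    ∀ᶠ x in 𝓝 p, x ∈ C → dist x (p - (K / κ) • ν) ≤ K / κ := by
  have hρ : 0 < min (r / 2) (K / κ) / 4 := by positivity
  filter_upwards [ball_mem_nhds p hρ] with x hxp hx
  refine dist_le_of_forall_mem_frontier_dist_le hν hhalf (min_le_right _ _)
    (fun q hq hqp => ?_) hx hxp
  exact dist_le_of_mem_frontier_of_lambdaConcaveOn hν hhalf hCconv hCcl hp hK.le hκ hFlip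
    hFconc hFfr hq (hqp.trans_le (min_le_left _ _))

theorem eventually_infDist_frontier_add_smul_le {γ₀ u : E} {R d₀ : ℝ} (hν : ‖ν‖ = 1)
    (hu : ‖u‖ = 1) (hγ₀ : γ₀ ∈ interior C) (hpγ₀ : p - γ₀ = d₀ • ν) (hd₀ : 0 < d₀) (hd₀R : d₀ < R)
    (hloc : ∀ᶠ x in 𝓝 p, x ∈ C → dist x (p - R • ν) ≤ R) :
    ∀ᶠ t in 𝓝 0, infDist (γ₀ + t • u) (frontier C) ≤
      R - √((R - d₀) ^ 2 + t ^ 2 + 2 * (R - d₀) * t * ⟪ν, u⟫) := by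
  have hγ₀M : γ₀ - (p - R • ν) = (R - d₀) • ν := by rw [sub_smul, ← hpγ₀]; abel
  have hγ₀Md : dist γ₀ (p - R • ν) = R - d₀ := by
    rw [dist_eq_norm, hγ₀M, norm_smul, hν, mul_one, Real.norm_of_nonneg (by linarith)]
  have hpM : p - R • ν + (R / dist γ₀ (p - R • ν)) • (γ₀ - (p - R • ν)) = p := by
    rw [hγ₀Md, hγ₀M, smul_smul (R / (R - d₀)), div_mul_cancel₀ _ (by linarith)]
    abel
  have hbound := eventually_infDist_frontier_le (M := p - R • ν) (R := R) hγ₀ (by linarith)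
    (by linarith) (by rwa [hpM])
  have hcurve : Tendsto (fun t : ℝ => γ₀ + t • u) (𝓝 0) (𝓝 γ₀) := by
    have : Continuous fun t : ℝ => γ₀ + t • u := by fun_prop
    simpa using this.tendsto 0
  filter_upwards [hcurve.eventually hbound] with t ht
  rwa [dist_eq_norm, add_sub_right_comm, hγ₀M, norm_smul_add_smul_eq_sqrt hν hu] at ht

end InnerProduct

theorem concavity_estimate_general (n : ℕ) (ε : ℝ) (hε : 0 < ε) (hε1 : ε < 1)
    (R : ℝ) (hR : R = (1 + ε) / (1 - ε))
    (C : Set (EuclideanSpace ℝ (Fin n)))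
    (hcomp : IsCompact C) (hconv : Convex ℝ C)
    (hdist : ∀ x ∈ C, Metric.infDist x (frontier C) < R)
    (hbd : ∀ b ∈ frontier C, ∃ r > (0 : ℝ), ∃ Fb : EuclideanSpace ℝ (Fin n) → ℝ,
      (∀ x ∈ Metric.ball b r ∩ C, ∀ y ∈ Metric.ball b r ∩ C,
        |Fb x - Fb y| ≤ (1 + ε) * dist x y) ∧
      LambdaConcaveOn (-1 + ε) Fb (Metric.ball b r ∩ C) ∧
      (∀ q ∈ Metric.ball b r ∩ frontier C, Fb q = -(1 / 2)) ∧
      (∀ q ∈ Metric.ball b r ∩ interior C, Fb q > -(1 / 2)))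
    (u : EuclideanSpace ℝ (Fin n)) (hu : ‖u‖ = 1)
    (γ₀ : EuclideanSpace ℝ (Fin n)) (hγ₀ : γ₀ ∈ interior C)
    (p : EuclideanSpace ℝ (Fin n)) (hp : p ∈ frontier C)
    (hnear : dist γ₀ p = Metric.infDist γ₀ (frontier C))
    (d₀ : ℝ) (hd₀ : d₀ = Metric.infDist γ₀ (frontier C))
    (α : ℝ) (hα : α = InnerProductGeometry.angle u (p - γ₀)) :
    Filter.limsup
      (fun t : ℝ =>
        (Metric.infDist (γ₀ + t • u) (frontier C)
          - (R - Real.sqrt ((R - d₀) ^ 2 + t ^ 2 + 2 * (R - d₀) * t * Real.cos α))) / t ^ 2)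
      (nhdsWithin 0 (Set.Ioi 0)) ≤ 0 := by
  have hd₀p : dist γ₀ p = d₀ := hnear.trans hd₀.symm
  have hd₀pos : 0 < d₀ := hd₀p ▸ dist_pos.2 fun h => hp.2 (h ▸ hγ₀)
  have hd₀R : d₀ < R := hd₀ ▸ hdist γ₀ (interior_subset hγ₀)
  set ν := d₀⁻¹ • (p - γ₀)
  have hpγ₀ : p - γ₀ = d₀ • ν := (smul_inv_smul₀ hd₀pos.ne' _).symm
  have hν : ‖ν‖ = 1 := by
    rw [norm_smul, norm_inv, ← dist_eq_norm', hd₀p, Real.norm_of_nonneg hd₀pos.le,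
      inv_mul_cancel₀ hd₀pos.ne']
  have hhalf : ∀ y ∈ C, ⟪y - p, ν⟫ ≤ 0 := fun y hy => by
    rw [real_inner_smul_right]
    exact mul_nonpos_of_nonneg_of_nonpos (inv_nonneg.2 hd₀pos.le)
      (hconv.inner_sub_nonpos_of_ball_subset_interior
        (hd₀ ▸ ball_infDist_frontier_subset_interior (interior_subset hγ₀)) hp.2
        (dist_comm γ₀ p ▸ hd₀p) hy)
  obtain ⟨r, hr, F, hFlip, hFconc, hFfr, -⟩ := hbd p hp
  rw [show -1 + ε = -(1 - ε) by ring] at hFconc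
  have hloc := eventually_dist_le_of_lambdaConcaveOn hν hhalf hconv hcomp.isClosed hp
    (by linarith) (sub_pos.2 hε1) hr hFlip hFconc hFfr
  rw [← hR] at hloc
  have hcos : Real.cos α = ⟪ν, u⟫ := by
    rw [hα, InnerProductGeometry.cos_angle, hu, ← dist_eq_norm', hd₀p, real_inner_smul_left,
      real_inner_comm, one_mul, inv_mul_eq_div]
  have hbound := eventually_infDist_frontier_add_smul_le hν hu hγ₀ hpγ₀ hd₀pos hd₀R hloc
  refine limsup_nonpos_of_eventually_nonpos ?_
  filter_upwards [hbound.filter_mono nhdsWithin_le_nhds] with t ht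
  rw [hcos]
  exact div_nonpos_of_nonpos_of_nonneg (by linarith) (sq_nonneg t)

/-- Concavity estimate: if the boundary of the compact convex set `C` is locally a level
set of `(1+ε)`-Lipschitz, `(-1+ε)`-concave functions, then along a unit-speed segment
starting in the interior, the distance to `∂C` is bounded above, up to `o(t²)`, by the
distance to a comparison circle of radius `R = (1+ε)/(1-ε)` in the Euclidean plane. -/
theorem concavity_estimate (n : ℕ) (hn : 1 ≤ n) (ε : ℝ) (hε : 0 < ε) (hε1 : ε < 1)
    (R : ℝ) (hR : R = (1 + ε) / (1 - ε))
    (C : Set (EuclideanSpace ℝ (Fin n)))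
    (hcomp : IsCompact C) (hconv : Convex ℝ C) (hint : (interior C).Nonempty)
    (hdist : ∀ x ∈ C, Metric.infDist x (frontier C) < R)
    (hbd : ∀ b ∈ frontier C, ∃ r > (0 : ℝ), ∃ Fb : EuclideanSpace ℝ (Fin n) → ℝ,
      (∀ x ∈ Metric.ball b r ∩ C, ∀ y ∈ Metric.ball b r ∩ C,
        |Fb x - Fb y| ≤ (1 + ε) * dist x y) ∧
      LambdaConcaveOn (-1 + ε) Fb (Metric.ball b r ∩ C) ∧
      (∀ q ∈ Metric.ball b r ∩ frontier C, Fb q = -(1 / 2)) ∧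
      (∀ q ∈ Metric.ball b r ∩ interior C, Fb q > -(1 / 2)))
    (u : EuclideanSpace ℝ (Fin n)) (hu : ‖u‖ = 1)
    (γ₀ : EuclideanSpace ℝ (Fin n)) (hγ₀ : γ₀ ∈ interior C)
    (p : EuclideanSpace ℝ (Fin n)) (hp : p ∈ frontier C)
    (hnear : dist γ₀ p = Metric.infDist γ₀ (frontier C))
    (d₀ : ℝ) (hd₀ : d₀ = Metric.infDist γ₀ (frontier C))
    (α : ℝ) (hα : α = InnerProductGeometry.angle u (p - γ₀)) :
    Filter.limsup
      (fun t : ℝ =>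
        (Metric.infDist (γ₀ + t • u) (frontier C)
          - (R - Real.sqrt ((R - d₀) ^ 2 + t ^ 2 + 2 * (R - d₀) * t * Real.cos α))) / t ^ 2)
      (nhdsWithin 0 (Set.Ioi 0)) ≤ 0 :=
  concavity_estimate_general n ε hε hε1 R hR C hcomp hconv hdist hbd u hu γ₀ hγ₀ p hp hnear d₀ hd₀ α
    hα
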